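/- Let Γ be a lattice in H₃(ℝ) and let μ be the unique H₃(ℝ)-invariant Borel probability measure on X = H₃(ℝ)/Γ. For (α,β) ∈ ℝ², let E_{α,β} := {f ∈ L²(X,μ) : for every g = (t₁,t₂,t₃) ∈ H₃(ℝ), f(g·x) = e^{2πi(αt₁+βt₂)} f(x) for μ-a.e. x}. Then E_{α,β} ≠ {0} if and only if (α,β) belongs to the dual lattice p(Γ)*, and in that case E_{α,β} is one-dimensional. (This is the one-dimensional part, with its multiplicities, of the decomposition of the Koopman representation of the homogeneous H₃(ℝ)-action on H₃(ℝ)/Γ.) -/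

import Mathlib

open MeasureTheory

/-- The real Heisenberg group `H₃(ℝ)`: `ℝ³` with
`(a,b,c)·(a′,b′,c′) = (a+a′, b+b′, c+c′+a·b′)`. -/
@[ext] structure H3 : Type where
  x : ℝ
  y : ℝ
  z : ℝ

namespace H3

instance : Mul H3 := ⟨fun g h => ⟨g.x + h.x, g.y + h.y, g.z + h.z + g.x * h.y⟩⟩
instance : One H3 := ⟨⟨0, 0, 0⟩⟩
instance : Inv H3 := ⟨fun g => ⟨-g.x, -g.y, -g.z + g.x * g.y⟩⟩

@[simp] lemma mul_x (g h : H3) : (g * h).x = g.x + h.x := rfl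
@[simp] lemma mul_y (g h : H3) : (g * h).y = g.y + h.y := rfl
@[simp] lemma mul_z (g h : H3) : (g * h).z = g.z + h.z + g.x * h.y := rfl
@[simp] lemma one_x : (1 : H3).x = 0 := rfl
@[simp] lemma one_y : (1 : H3).y = 0 := rfl
@[simp] lemma one_z : (1 : H3).z = 0 := rfl
@[simp] lemma inv_x (g : H3) : g⁻¹.x = -g.x := rfl
@[simp] lemma inv_y (g : H3) : g⁻¹.y = -g.y := rfl
@[simp] lemma inv_z (g : H3) : g⁻¹.z = -g.z + g.x * g.y := rfl

instance : Group H3 where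
  mul_assoc a b c := by ext <;> simp <;> ring
  one_mul a := by ext <;> simp
  mul_one a := by ext <;> simp
  inv_mul_cancel a := by ext <;> simp

/-- The Euclidean topology on `H₃(ℝ)`. -/
instance : TopologicalSpace H3 :=
  TopologicalSpace.induced (fun g => (g.x, g.y, g.z)) inferInstance

instance : MeasurableSpace H3 := borel H3

/-- `a(t)`. -/
def Ha (t : ℝ) : H3 := ⟨t, 0, 0⟩
/-- `b(t)`. -/
def Hb (t : ℝ) : H3 := ⟨0, t, 0⟩
/-- `c(t)`, the center. -/
def Hc (t : ℝ) : H3 := ⟨0, 0, t⟩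

/-- The projection `p : H₃(ℝ) → ℝ²`. -/
def pmap (g : H3) : ℝ × ℝ := (g.x, g.y)

/-- The kernel of `p`, i.e. the center of `H₃(ℝ)`, as a subgroup. -/
def pKer : Subgroup H3 where
  carrier := {g | g.x = 0 ∧ g.y = 0}
  one_mem' := ⟨rfl, rfl⟩
  mul_mem' := by
    rintro a b ⟨ha1, ha2⟩ ⟨hb1, hb2⟩
    exact ⟨by simp [ha1, hb1], by simp [ha2, hb2]⟩
  inv_mem' := by
    rintro a ⟨ha1, ha2⟩
    exact ⟨by simp [ha1], by simp [ha2]⟩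

/-- A lattice in `H₃(ℝ)`: a discrete subgroup with compact quotient. -/
def IsLattice (Γ : Subgroup H3) : Prop :=
  DiscreteTopology Γ ∧ CompactSpace (H3 ⧸ Γ)

/-- `k_Γ`: the index of the commutator subgroup `[Γ,Γ]` in `Γ ∩ ker p`. -/
noncomputable def kIdx (Γ : Subgroup H3) : ℕ :=
  Subgroup.relIndex ⁅Γ, Γ⁆ (Γ ⊓ pKer)

/-- The integer lattice `ℤ² ⊆ ℝ²`. -/
def intLattice : Set (ℝ × ℝ) := {v | ∃ m n : ℤ, v = ((m : ℝ), (n : ℝ))}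

/-- The action of a `2×2` matrix on `ℝ²`. -/
def matVec (A : Matrix (Fin 2) (Fin 2) ℝ) (v : ℝ × ℝ) : ℝ × ℝ :=
  (A 0 0 * v.1 + A 0 1 * v.2, A 1 0 * v.1 + A 1 1 * v.2)

/-- The dual of a subset of `ℝ²`:
all vectors pairing integrally with every element of `S`. -/
def dualSet (S : Set (ℝ × ℝ)) : Set (ℝ × ℝ) :=
  {v | ∀ w ∈ S, ∃ n : ℤ, v.1 * w.1 + v.2 * w.2 = (n : ℝ)}

end H3

open H3 Complex

noncomputable instance (Γ : Subgroup H3) : MeasurableSpace (H3 ⧸ Γ) := borel _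

/-- The eigenspace `E_{α,β} ⊆ L²(H₃(ℝ)/Γ, μ)` of functions with
`f(g·x) = e^{2πi(α t₁ + β t₂)} f(x)` a.e., for every `g = (t₁,t₂,t₃)`. -/
def eigSet (Γ : Subgroup H3) (μ : Measure (H3 ⧸ Γ)) (α β : ℝ) : Set (Lp ℂ 2 μ) :=
  {f | ∀ g : H3, ∀ᵐ x ∂μ,
    f (g • x) = Complex.exp (2 * Real.pi * Complex.I * (α * g.x + β * g.y)) * f x}

namespace H3Aux

open H3 Complex MeasureTheory

/-! ### Topological and measurable structure on `H3` -/

lemma continuous_coords : Continuous (fun g : H3 => (g.x, g.y, g.z)) := continuous_induced_dom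

lemma continuous_x : Continuous (fun g : H3 => g.x) := continuous_fst.comp continuous_coords
lemma continuous_y : Continuous (fun g : H3 => g.y) :=
  (continuous_fst.comp continuous_snd).comp continuous_coords
lemma continuous_z : Continuous (fun g : H3 => g.z) :=
  (continuous_snd.comp continuous_snd).comp continuous_coords

/-- Coordinates as a homeomorphism. -/
def e3 : H3 ≃ₜ ℝ × ℝ × ℝ where
  toFun g := (g.x, g.y, g.z)
  invFun p := ⟨p.1, p.2.1, p.2.2⟩
  left_inv _ := rfl
  right_inv _ := rfl
  continuous_toFun := continuous_induced_dom
  continuous_invFun := continuous_induced_rng.mpr continuous_id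

instance : BorelSpace H3 := ⟨rfl⟩
instance : T2Space H3 := e3.isEmbedding.t2Space
instance : SecondCountableTopology H3 := e3.isEmbedding.secondCountableTopology

instance : IsTopologicalGroup H3 where
  continuous_mul := by
    refine continuous_induced_rng.mpr ?_
    simp only [Function.comp_def, mul_x, mul_y, mul_z]
    exact ((continuous_x.comp continuous_fst).add (continuous_x.comp continuous_snd)).prodMk
      ((((continuous_y.comp continuous_fst).add (continuous_y.comp continuous_snd))).prodMk
        (((continuous_z.comp continuous_fst).add (continuous_z.comp continuous_snd)).add
          ((continuous_x.comp continuous_fst).mul (continuous_y.comp continuous_snd))))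
  continuous_inv := by
    refine continuous_induced_rng.mpr ?_
    simp only [Function.comp_def, inv_x, inv_y, inv_z]
    exact continuous_x.neg.prodMk (continuous_y.neg.prodMk
      (continuous_z.neg.add (continuous_x.mul continuous_y)))

/-- The parametrization of `H3` by `ℝ³`. -/
def φ (p : ℝ × ℝ × ℝ) : H3 := ⟨p.1, p.2.1, p.2.2⟩

lemma continuous_φ : Continuous φ := e3.symm.continuous
lemma measurable_φ : Measurable φ := continuous_φ.measurable

/-- Right translation, in coordinates, preserves Lebesgue measure. -/
lemma rt_preserving (h : H3) :
    MeasurePreserving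
      (fun p : ℝ × ℝ × ℝ => (p.1 + h.x, p.2.1 + h.y, p.2.2 + h.z + p.1 * h.y))
      volume volume := by
  have key : MeasurePreserving
      (fun p : ℝ × (ℝ × ℝ) => (p.1 + h.x, (p.2.1 + h.y, p.2.2 + h.z + p.1 * h.y)))
      ((volume : Measure ℝ).prod ((volume : Measure ℝ).prod (volume : Measure ℝ)))
      ((volume : Measure ℝ).prod ((volume : Measure ℝ).prod (volume : Measure ℝ))) := by
    refine MeasurePreserving.skew_product (measurePreserving_add_right volume h.x)
      (g := fun (a : ℝ) (q : ℝ × ℝ) => (q.1 + h.y, q.2 + h.z + a * h.y)) (by fun_prop) ?_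
    refine Filter.Eventually.of_forall fun a => ?_
    have : MeasurePreserving (fun q : ℝ × ℝ => (q.1 + h.y, q.2 + (h.z + a * h.y)))
        ((volume : Measure ℝ).prod volume) ((volume : Measure ℝ).prod volume) :=
      (measurePreserving_add_right volume h.y).prod (measurePreserving_add_right volume _)
    simpa [← add_assoc] using this.map_eq
  simpa [← Measure.volume_eq_prod] using key

lemma φ_rt (h : H3) (p : ℝ × ℝ × ℝ) :
    φ (p.1 + h.x, p.2.1 + h.y, p.2.2 + h.z + p.1 * h.y) = φ p * h := rfl

lemma vol3_ne_zero : (volume : Measure (ℝ × ℝ × ℝ)) ≠ 0 := by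
  intro h0
  have h1 : (volume : Measure (ℝ × ℝ × ℝ))
      ((Set.Icc (0:ℝ) 1) ×ˢ ((Set.Icc (0:ℝ) 1) ×ˢ (Set.Icc (0:ℝ) 1))) = 1 := by
    rw [Measure.volume_eq_prod, Measure.prod_prod, Measure.volume_eq_prod, Measure.prod_prod]
    simp
  rw [h0] at h1
  simp at h1

/-- If a property holds for a.e. `p`, then it holds for a.e. right-translate. -/
lemma ae_rt (h : H3) {P : H3 → Prop} (hP : ∀ᵐ p : ℝ × ℝ × ℝ ∂volume, P (φ p)) :
    ∀ᵐ p : ℝ × ℝ × ℝ ∂volume, P (φ p * h) := by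
  have := (rt_preserving h).quasiMeasurePreserving.ae hP
  simpa [φ_rt] using this

end H3Aux
namespace H3Aux

open H3 Complex MeasureTheory

variable {Γ : Subgroup H3}

instance (Γ : Subgroup H3) : BorelSpace (H3 ⧸ Γ) := ⟨rfl⟩

lemma smul_mk (g y : H3) : g • (QuotientGroup.mk y : H3 ⧸ Γ) = QuotientGroup.mk (g * y) := rfl

lemma measurable_const_smul' (g : H3) :
    Measurable (fun x : H3 ⧸ Γ => g • x) := (continuous_const_smul g).measurable

lemma measurable_smul_pair :
    Measurable (fun q : (ℝ × ℝ × ℝ) × (H3 ⧸ Γ) => φ q.1 • q.2) :=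
  ((continuous_φ.comp continuous_fst).smul continuous_snd).measurable

/-- transfer an a.e. statement along the `μ`-preserving map `x ↦ g • x`. -/
lemma ae_smul {μ : Measure (H3 ⧸ Γ)} (hμ : ∀ g : H3, Measure.map (fun x => g • x) μ = μ)
    (g : H3) {P : (H3 ⧸ Γ) → Prop} (h : ∀ᵐ x ∂μ, P x) : ∀ᵐ x ∂μ, P (g • x) :=
  ae_of_ae_map (measurable_const_smul' g).aemeasurable (by rwa [hμ g])

/-! ### The character -/

/-- The character `χ_{α,β}` of `H3`. -/
noncomputable def chi (α β : ℝ) (g : H3) : ℂ :=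
  Complex.exp (2 * Real.pi * Complex.I * (α * g.x + β * g.y))

lemma chi_mul (α β : ℝ) (g h : H3) : chi α β (g * h) = chi α β g * chi α β h := by
  simp only [chi, mul_x, mul_y, ← Complex.exp_add]
  congr 1
  push_cast
  ring

lemma chi_ne_zero (α β : ℝ) (g : H3) : chi α β g ≠ 0 := Complex.exp_ne_zero _

lemma chi_one (α β : ℝ) : chi α β 1 = 1 := by simp [chi]

lemma chi_conj (α β : ℝ) (y γ : H3) : chi α β (y * γ * y⁻¹) = chi α β γ := by
  rw [chi_mul, chi_mul]
  have h3 : chi α β y * chi α β y⁻¹ = 1 := by rw [← chi_mul, mul_inv_cancel, chi_one]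
  calc chi α β y * chi α β γ * chi α β y⁻¹
      = chi α β y * chi α β y⁻¹ * chi α β γ := by ring
    _ = chi α β γ := by rw [h3, one_mul]

lemma abs_chi (α β : ℝ) (g : H3) : ‖chi α β g‖ = 1 := by
  have : (2 * (Real.pi:ℂ) * Complex.I * ((α:ℂ) * g.x + (β:ℂ) * g.y))
      = ((2 * Real.pi * (α * g.x + β * g.y) : ℝ) : ℂ) * Complex.I := by
    push_cast; ring
  rw [chi, this, Complex.norm_exp_ofReal_mul_I]

lemma continuous_chi (α β : ℝ) : Continuous (chi α β) := by
  refine Complex.continuous_exp.comp ?_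
  refine Continuous.mul continuous_const ?_
  exact (continuous_const.mul (Complex.continuous_ofReal.comp continuous_x)).add
    (continuous_const.mul (Complex.continuous_ofReal.comp continuous_y))

lemma chi_eq_one_of_dual {α β : ℝ} (hd : (α, β) ∈ dualSet (pmap '' (Γ : Set H3)))
    {γ : H3} (hγ : γ ∈ Γ) : chi α β γ = 1 := by
  obtain ⟨n, hn⟩ := hd (pmap γ) ⟨γ, hγ, rfl⟩
  simp only [pmap] at hn
  rw [chi, Complex.exp_eq_one_iff]
  refine ⟨n, ?_⟩
  rw [show ((α:ℂ) * γ.x + (β:ℂ) * γ.y) = ((α * γ.x + β * γ.y : ℝ) : ℂ) by push_cast; ring, hn]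
  push_cast; ring

lemma dual_of_chi_eq_one {α β : ℝ} {γ : H3} (h : chi α β γ = 1) :
    ∃ n : ℤ, α * γ.x + β * γ.y = (n : ℝ) := by
  rw [chi, Complex.exp_eq_one_iff] at h
  obtain ⟨n, hn⟩ := h
  refine ⟨n, ?_⟩
  have h2 : (2 * (Real.pi:ℂ) * Complex.I) * ((α:ℂ) * γ.x + (β:ℂ) * γ.y)
      = (2 * (Real.pi:ℂ) * Complex.I) * (n : ℂ) := by rw [hn]; ring
  have hne : (2 * (Real.pi:ℂ) * Complex.I) ≠ 0 := by
    simp [Real.pi_ne_zero, Complex.I_ne_zero]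
  have h3 := mul_left_cancel₀ hne h2
  exact_mod_cast h3

end H3Aux
namespace H3Aux

open H3 Complex MeasureTheory

variable {Γ : Subgroup H3}

/-! ### The explicit eigenfunction on the quotient -/

/-- Given `(α,β)` in the dual of `p(Γ)`, the character descends to the quotient. -/
noncomputable def Fq (α β : ℝ) (Γ : Subgroup H3)
    (hd : (α, β) ∈ dualSet (pmap '' (Γ : Set H3))) : H3 ⧸ Γ → ℂ :=
  Quotient.lift (chi α β) (by
    intro a b hab
    have h : a⁻¹ * b ∈ Γ := QuotientGroup.leftRel_apply.mp hab
    have : b = a * (a⁻¹ * b) := by group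
    rw [this, chi_mul, chi_eq_one_of_dual hd h, mul_one])

lemma Fq_mk (α β : ℝ) (Γ : Subgroup H3) (hd : (α, β) ∈ dualSet (pmap '' (Γ : Set H3)))
    (y : H3) : Fq α β Γ hd (QuotientGroup.mk y) = chi α β y := rfl

lemma continuous_Fq (α β : ℝ) (Γ : Subgroup H3)
    (hd : (α, β) ∈ dualSet (pmap '' (Γ : Set H3))) : Continuous (Fq α β Γ hd) := by
  rw [(QuotientGroup.isQuotientMap_mk Γ).continuous_iff]
  exact continuous_chi α β

lemma Fq_smul (α β : ℝ) (Γ : Subgroup H3) (hd : (α, β) ∈ dualSet (pmap '' (Γ : Set H3)))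
    (g : H3) (x : H3 ⧸ Γ) : Fq α β Γ hd (g • x) = chi α β g * Fq α β Γ hd x := by
  obtain ⟨y, rfl⟩ := QuotientGroup.mk_surjective x
  rw [smul_mk, Fq_mk, Fq_mk, chi_mul]

lemma abs_Fq (α β : ℝ) (Γ : Subgroup H3) (hd : (α, β) ∈ dualSet (pmap '' (Γ : Set H3)))
    (x : H3 ⧸ Γ) : ‖Fq α β Γ hd x‖ = 1 := by
  obtain ⟨y, rfl⟩ := QuotientGroup.mk_surjective x
  rw [Fq_mk, abs_chi]

lemma Fq_ne_zero (α β : ℝ) (Γ : Subgroup H3) (hd : (α, β) ∈ dualSet (pmap '' (Γ : Set H3)))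
    (x : H3 ⧸ Γ) : Fq α β Γ hd x ≠ 0 := by
  intro h
  have := abs_Fq α β Γ hd x
  rw [h] at this
  simp at this

lemma memℒp_Fq (α β : ℝ) (Γ : Subgroup H3) (hd : (α, β) ∈ dualSet (pmap '' (Γ : Set H3)))
    (μ : Measure (H3 ⧸ Γ)) [IsProbabilityMeasure μ] : MemLp (Fq α β Γ hd) 2 μ :=
  MemLp.of_bound (continuous_Fq α β Γ hd).measurable.aestronglyMeasurable 1
    (Filter.Eventually.of_forall fun x => by
      rw [abs_Fq])

/-! ### Ergodicity of the `H3`-action -/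

/-- Any measurable function invariant under every translation is a.e. constant. -/
lemma ae_const_of_invariant (μ : Measure (H3 ⧸ Γ)) [IsProbabilityMeasure μ]
    (hμ : ∀ g : H3, Measure.map (fun x => g • x) μ = μ)
    {u : H3 ⧸ Γ → ℂ} (hum : Measurable u)
    (hinv : ∀ g : H3, ∀ᵐ x ∂μ, u (g • x) = u x) : ∃ c : ℂ, ∀ᵐ x ∂μ, u x = c := by
  -- the bad set in the product space
  set N : Set ((ℝ × ℝ × ℝ) × (H3 ⧸ Γ)) := {q | ¬ u (φ q.1 • q.2) = u q.2} with hN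
  have hmeasN : MeasurableSet N := by
    refine (measurableSet_eq_fun ?_ ?_).compl
    · exact hum.comp measurable_smul_pair
    · exact hum.comp measurable_snd
  have hnullN : ((volume : Measure (ℝ × ℝ × ℝ)).prod μ) N = 0 := by
    rw [Measure.measure_prod_null hmeasN]
    refine Filter.Eventually.of_forall fun p => ?_
    have := hinv (φ p)
    simpa [ae_iff, hN] using this
  -- swap Fubini
  have hswap : ((μ.prod (volume : Measure (ℝ × ℝ × ℝ)))) (Prod.swap ⁻¹' N) = 0 := by
    rw [← Measure.prod_swap, Measure.map_apply measurable_swap hmeasN] at hnullN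
    exact hnullN
  have hae : ∀ᵐ x ∂μ, ∀ᵐ p : ℝ × ℝ × ℝ ∂volume, u (φ p • x) = u x := by
    have h1 : ∀ᵐ q ∂(μ.prod (volume : Measure (ℝ × ℝ × ℝ))),
        u (φ q.2 • q.1) = u q.1 := by
      rw [ae_iff]
      convert hswap using 2
      rfl
    exact Measure.ae_ae_of_ae_prod h1
  -- pick a base point
  have hne : (ae μ).NeBot := ae_neBot.2 (IsProbabilityMeasure.ne_zero μ)
  obtain ⟨x₀, hx₀⟩ := hae.exists
  refine ⟨u x₀, ?_⟩
  filter_upwards [hae] with x hx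
  -- x = h • x₀
  obtain ⟨y, rfl⟩ := QuotientGroup.mk_surjective x
  obtain ⟨y₀, hy₀⟩ := QuotientGroup.mk_surjective x₀
  set h : H3 := y * y₀⁻¹ with hh
  have hxx : (QuotientGroup.mk y : H3 ⧸ Γ) = h • x₀ := by
    rw [← hy₀, smul_mk]
    congr 1
    rw [hh]
    group
  have h2 : ∀ᵐ p : ℝ × ℝ × ℝ ∂volume, u ((φ p * h) • x₀) = u x₀ := ae_rt (P := fun g => u (g • x₀) = u x₀) h hx₀
  have h3 : ∀ᵐ p : ℝ × ℝ × ℝ ∂volume, u (φ p • (QuotientGroup.mk y : H3 ⧸ Γ)) = u x₀ := by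
    filter_upwards [h2] with p hp
    rw [hxx, smul_smul]
    exact hp
  have h4 := hx.and h3
  have : ∃ p : ℝ × ℝ × ℝ, u (φ p • (QuotientGroup.mk y : H3 ⧸ Γ)) = u (QuotientGroup.mk y)
      ∧ u (φ p • (QuotientGroup.mk y : H3 ⧸ Γ)) = u x₀ := by
    have hne3 : (ae (volume : Measure (ℝ × ℝ × ℝ))).NeBot := ae_neBot.2 vol3_ne_zero
    exact h4.exists
  obtain ⟨p, hp1, hp2⟩ := this
  rw [← hp1, hp2]

end H3Aux
open H3Aux in
/-- Theorem 4.2, one-dimensional part: `E_{α,β} ≠ {0}` iff `(α,β)` lies in the dual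
lattice `p(Γ)*`, and in that case `E_{α,β}` is one-dimensional. -/
theorem eigenvalues_of_nilmanifold
    (Γ : Subgroup H3) (hΓ : IsLattice Γ)
    (μ : Measure (H3 ⧸ Γ)) [IsProbabilityMeasure μ]
    (hμ : ∀ g : H3, Measure.map (fun x => g • x) μ = μ)
    (α β : ℝ) :
    (eigSet Γ μ α β ≠ {0} ↔ (α, β) ∈ dualSet (pmap '' (Γ : Set H3))) ∧
    ((α, β) ∈ dualSet (pmap '' (Γ : Set H3)) →
      ∃ f ∈ eigSet Γ μ α β, f ≠ 0 ∧ ∀ h ∈ eigSet Γ μ α β, ∃ c : ℂ, h = c • f) := by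
  classical
  haveI hne : (MeasureTheory.ae μ).NeBot := ae_neBot.2 (IsProbabilityMeasure.ne_zero μ)
  -- `0` always belongs to the eigenspace
  have zero_mem : (0 : Lp ℂ 2 μ) ∈ eigSet Γ μ α β := by
    intro g
    have h0 : ∀ᵐ x ∂μ, (0 : Lp ℂ 2 μ) x = 0 := Lp.coeFn_zero ℂ 2 μ
    have h0' : ∀ᵐ x ∂μ, (0 : Lp ℂ 2 μ) (g • x) = 0 :=
      ae_smul hμ g (P := fun x => (0 : Lp ℂ 2 μ) x = 0) h0
    filter_upwards [h0, h0'] with x h1 h2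
    rw [h1, h2, mul_zero]
  -- forward direction
  have forward : ∀ f : Lp ℂ 2 μ, f ∈ eigSet Γ μ α β → f ≠ 0 →
      (α, β) ∈ dualSet (pmap '' (Γ : Set H3)) := by
    intro f hf hfne w hw
    obtain ⟨γ, hγΓ, rfl⟩ := hw
    set u : H3 ⧸ Γ → ℂ := ⇑f with hu
    have hum : Measurable u := (Lp.stronglyMeasurable f).measurable
    set N : Set ((ℝ × ℝ × ℝ) × (H3 ⧸ Γ)) :=
      {q | ¬ u (φ q.1 • q.2) = chi α β (φ q.1) * u q.2} with hN
    have hmeasN : MeasurableSet N := by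
      refine (measurableSet_eq_fun (hum.comp measurable_smul_pair) ?_).compl
      exact ((continuous_chi α β).measurable.comp (measurable_φ.comp measurable_fst)).mul
        (hum.comp measurable_snd)
    have hnullN : ((volume : Measure (ℝ × ℝ × ℝ)).prod μ) N = 0 := by
      rw [Measure.measure_prod_null hmeasN]
      refine Filter.Eventually.of_forall fun p => ?_
      have := hf (φ p)
      simpa [ae_iff, hN, chi] using this
    have hswap : ((μ.prod (volume : Measure (ℝ × ℝ × ℝ)))) (Prod.swap ⁻¹' N) = 0 := by
      rw [← Measure.prod_swap, Measure.map_apply measurable_swap hmeasN] at hnullN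
      exact hnullN
    have hprod : ∀ᵐ q ∂(μ.prod (volume : Measure (ℝ × ℝ × ℝ))),
        u (φ q.2 • q.1) = chi α β (φ q.2) * u q.1 := by
      rw [ae_iff]
      convert hswap using 2
      rfl
    have hae : ∀ᵐ x ∂μ, ∀ᵐ p : ℝ × ℝ × ℝ ∂volume,
        u (φ p • x) = chi α β (φ p) * u x := Measure.ae_ae_of_ae_prod hprod
    have hB : ¬ (∀ᵐ x ∂μ, u x = 0) := fun h => hfne (Lp.eq_zero_iff_ae_eq_zero.mpr h)
    have hex : ∃ x, (∀ᵐ p : ℝ × ℝ × ℝ ∂volume,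
        u (φ p • x) = chi α β (φ p) * u x) ∧ u x ≠ 0 := by
      by_contra hcon
      push_neg at hcon
      apply hB
      filter_upwards [hae] with x hx
      exact hcon x hx
    obtain ⟨x₀, hgood, hux0⟩ := hex
    obtain ⟨y₀, hy₀⟩ := QuotientGroup.mk_surjective x₀
    set δ : H3 := y₀ * γ * y₀⁻¹ with hδ
    have key : ∀ g : H3, (g * δ) • x₀ = g • x₀ := by
      intro g
      rw [← hy₀, smul_mk, smul_mk]
      have hgy : g * δ * y₀ = (g * y₀) * γ := by rw [hδ]; group
      rw [hgy, QuotientGroup.mk_mul_of_mem _ hγΓ]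
    have h2 : ∀ᵐ p : ℝ × ℝ × ℝ ∂volume,
        u ((φ p * δ) • x₀) = chi α β (φ p * δ) * u x₀ :=
      ae_rt (P := fun g => u (g • x₀) = chi α β g * u x₀) δ hgood
    haveI hne3 : (MeasureTheory.ae (volume : Measure (ℝ × ℝ × ℝ))).NeBot :=
      ae_neBot.2 vol3_ne_zero
    obtain ⟨p, hp1, hp2⟩ := (hgood.and h2).exists
    rw [key, hp1, chi_mul] at hp2
    have hchi : chi α β δ = 1 := by
      have h1 := mul_right_cancel₀ hux0 hp2
      have h2 : chi α β (φ p) * 1 = chi α β (φ p) * chi α β δ := by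
        rw [mul_one]; exact h1
      exact (mul_left_cancel₀ (chi_ne_zero α β (φ p)) h2).symm
    rw [hδ, chi_conj] at hchi
    obtain ⟨n, hn⟩ := dual_of_chi_eq_one hchi
    exact ⟨n, by simpa [pmap] using hn⟩
  -- backward direction, with one-dimensionality
  have backward : (α, β) ∈ dualSet (pmap '' (Γ : Set H3)) →
      ∃ f ∈ eigSet Γ μ α β, f ≠ 0 ∧ ∀ h ∈ eigSet Γ μ α β, ∃ c : ℂ, h = c • f := by
    intro hd
    set F : H3 ⧸ Γ → ℂ := Fq α β Γ hd with hF
    have hmem : MemLp F 2 μ := memℒp_Fq α β Γ hd μ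
    set fL : Lp ℂ 2 μ := hmem.toLp F with hfL
    have hcoe : ∀ᵐ x ∂μ, fL x = F x := MemLp.coeFn_toLp hmem
    have hfeig : fL ∈ eigSet Γ μ α β := by
      intro g
      have h1 : ∀ᵐ x ∂μ, fL (g • x) = F (g • x) :=
        ae_smul hμ g (P := fun x => fL x = F x) hcoe
      filter_upwards [h1, hcoe] with x hx1 hx2
      rw [hx1, hx2, hF, Fq_smul]
      rfl
    have hfne : fL ≠ 0 := by
      intro h0
      have h1 := Lp.eq_zero_iff_ae_eq_zero.mp h0
      have h2 : ∀ᵐ x ∂μ, F x = 0 := by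
        filter_upwards [hcoe, h1] with x ha hb
        rw [← ha]
        exact hb
      obtain ⟨x, hx⟩ := h2.exists
      exact Fq_ne_zero α β Γ hd x hx
    refine ⟨fL, hfeig, hfne, ?_⟩
    intro h hh
    set v : H3 ⧸ Γ → ℂ := ⇑h with hv
    have hvm : Measurable v := (Lp.stronglyMeasurable h).measurable
    set u : H3 ⧸ Γ → ℂ := fun x => v x / F x with hu
    have hum : Measurable u := hvm.div (continuous_Fq α β Γ hd).measurable
    have hinv : ∀ g : H3, ∀ᵐ x ∂μ, u (g • x) = u x := by
      intro g
      filter_upwards [hh g] with x hx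
      have hx' : v (g • x) = chi α β g * v x := hx
      show v (g • x) / F (g • x) = v x / F x
      rw [hx', hF, Fq_smul, ← hF, mul_div_mul_left _ _ (chi_ne_zero α β g)]
    obtain ⟨c, hc⟩ := ae_const_of_invariant μ hμ hum hinv
    refine ⟨c, ?_⟩
    have hsub : h - c • fL = 0 := by
      rw [Lp.eq_zero_iff_ae_eq_zero]
      filter_upwards [Lp.coeFn_sub h (c • fL), Lp.coeFn_smul c fL, hcoe, hc] with x h1 h2 h3 h4
      have hvx : v x = c * F x := by
        have hFx : F x ≠ 0 := Fq_ne_zero α β Γ hd x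
        exact (div_eq_iff hFx).mp h4
      show (h - c • fL) x = (0 : H3 ⧸ Γ → ℂ) x
      rw [h1, Pi.sub_apply, h2, Pi.smul_apply, h3, smul_eq_mul, Pi.zero_apply]
      show v x - c * F x = 0
      rw [hvx, sub_self]
    exact sub_eq_zero.mp hsub
  refine ⟨⟨?_, ?_⟩, backward⟩
  · intro hne
    have hex : ∃ f ∈ eigSet Γ μ α β, f ≠ 0 := by
      by_contra hcon
      push_neg at hcon
      apply hne
      exact Set.eq_singleton_iff_unique_mem.mpr ⟨zero_mem, fun f hf => hcon f hf⟩
    obtain ⟨f, hf, hfne⟩ := hex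
    exact forward f hf hfne
  · intro hd heq
    obtain ⟨f, hf, hfne, _⟩ := backward hd
    rw [heq] at hf
    exact hfne hf
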